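/- arXiv:1301.4639 — 2 statements merged into one kernel-verified Lean document; each statement's English description precedes it below -/
import Mathlib

section
/- Let G be a finite simple graph whose vertex connectivity is at least m. Then for any vertex subset X ⊆ V(G) with |X| ≥ m and |V(G) \ X| ≥ m, the set of edges of G with exactly one endpoint in X contains at least m pairwise disjoint (independent) edges, i.e., a matching of size m. -/
/-!
Match `X` into `Xᶜ` along edges of `G`, allowing `|X| - m` vertices of `X` to stay unmatched.
By Hall's theorem with deficiency `|X| - m`, this is possible once every `A ⊆ X` has at least
`|A| - (|X| - m)` neighbours in `Xᶜ`. Otherwise these neighbours together with `X \ A` form a set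
of fewer than `m` vertices whose removal separates `A` from the rest of `Xᶜ`, which is nonempty
since `|Xᶜ| ≥ m`.
-/

open SimpleGraph

variable {V : Type*}

/-- The degree of a vertex, as the cardinality of its neighbor set. -/
noncomputable def degN (G : SimpleGraph V) (v : V) : ℕ := (G.neighborSet v).ncard

/-- The minimum degree `δ(G)`. -/
noncomputable def minDeg (G : SimpleGraph V) : ℕ := sInf {k | ∃ v, degN G v = k}

/-- `d_G(X)`: the number of edges of `G` with exactly one endpoint in `X`. -/
noncomputable def dOut (G : SimpleGraph V) (X : Set V) : ℕ :=
  {e ∈ G.edgeSet | ∃ x ∈ X, ∃ y ∈ Xᶜ, e = s(x, y)}.ncard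

/-- `F` is an `h`-extra edge-cut of `G`: a set of edges of `G` whose removal disconnects `G`
and such that every connected component of `G - F` has more than `h` vertices. -/
def IsExtraEdgeCut (G : SimpleGraph V) (h : ℕ) (F : Set (Sym2 V)) : Prop :=
  F ⊆ G.edgeSet ∧ ¬(G.deleteEdges F).Connected ∧
    ∀ c : (G.deleteEdges F).ConnectedComponent, h < c.supp.ncard

/-- `G` is `λ^(h)`-connected: an `h`-extra edge-cut exists. -/
def LambdaConn (G : SimpleGraph V) (h : ℕ) : Prop := ∃ F, IsExtraEdgeCut G h F

/-- The `h`-extra edge-connectivity `λ^(h)(G)`: the minimum cardinality of an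
`h`-extra edge-cut. -/
noncomputable def lambdaH (G : SimpleGraph V) (h : ℕ) : ℕ :=
  sInf {k | ∃ F, IsExtraEdgeCut G h F ∧ F.ncard = k}

/-- `ξ_h(G)`: the minimum of `d_G(X)` over vertex sets `X` of size `h + 1` inducing a
connected subgraph. -/
noncomputable def xiH (G : SimpleGraph V) (h : ℕ) : ℕ :=
  sInf {k | ∃ X : Set V, X.ncard = h + 1 ∧ (G.induce X).Connected ∧ dOut G X = k}

/-- `G` is super-`λ^(h)`: it is connected, `λ^(h)`-connected, `λ^(h)`-optimal
(`λ^(h)(G) = ξ_h(G)`), and every minimum `h`-extra edge-cut leaves a component with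
exactly `h + 1` vertices. -/
def SuperLambda (G : SimpleGraph V) (h : ℕ) : Prop :=
  G.Connected ∧ LambdaConn G h ∧ lambdaH G h = xiH G h ∧
    ∀ F : Set (Sym2 V), IsExtraEdgeCut G h F → F.ncard = lambdaH G h →
      ∃ c : (G.deleteEdges F).ConnectedComponent, c.supp.ncard = h + 1

/-- The persistence `ρ^(h)(G)`: the largest `m` such that `G - F` is super-`λ^(h)` for
every set `F` of at most `m` edges of `G`. -/
noncomputable def rhoH (G : SimpleGraph V) (h : ℕ) : ℕ :=
  sSup {m : ℕ | ∀ F : Set (Sym2 V), F ⊆ G.edgeSet → F.ncard ≤ m →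
    SuperLambda (G.deleteEdges F) h}

/-- `ξ(G)`: the minimum edge-degree `deg x + deg y - 2` over the edges `xy` of `G`. -/
noncomputable def xiEdge (G : SimpleGraph V) : ℕ :=
  sInf {k | ∃ x y, G.Adj x y ∧ degN G x + degN G y - 2 = k}

/-- `η(G)`: the number of edges of `G` whose edge-degree equals `ξ(G)`. -/
noncomputable def eta (G : SimpleGraph V) : ℕ :=
  {e ∈ G.edgeSet | ∃ x y, e = s(x, y) ∧ degN G x + degN G y - 2 = xiEdge G}.ncard

/-- `G` is `m`-connected: its vertex connectivity is at least `m`, i.e. `G` has more than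
`m` vertices and removing fewer than `m` vertices leaves a connected graph. -/
def IsKConnected {V : Type*} [Fintype V] (G : SimpleGraph V) (m : ℕ) : Prop :=
  m < Fintype.card V ∧ ∀ S : Set V, S.ncard < m → (G.induce Sᶜ).Connected

open Finset

namespace Finset

variable {ι α : Type*} [Fintype ι] [DecidableEq α]

/-- Adjoin `d` new elements to every `t i`: Hall's condition then holds, and the indices matched
to old elements form `s`. -/
theorem exists_injective_of_card_le_card_biUnion_add (t : ι → Finset α) (d : ℕ)
    (h : ∀ s : Finset ι, #s ≤ #(s.biUnion t) + d) :
    ∃ s : Finset ι, Fintype.card ι ≤ #s + d ∧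
      ∃ f : s → α, Function.Injective f ∧ ∀ i : s, f i ∈ t i := by
  set t' : ι → Finset (α ⊕ Fin d) := fun i => (t i).map .inl ∪ univ.map .inr
  have hall : ∀ s : Finset ι, #s ≤ #(s.biUnion t') := by
    intro s
    rcases s.eq_empty_or_nonempty with rfl | hs
    · simp
    have hunion : s.biUnion t' = (s.biUnion t).map .inl ∪ univ.map .inr := by
      ext (a | k) <;> simp [t', hs.exists_mem]
    rw [hunion, card_union_of_disjoint (by simp [disjoint_left]), card_map, card_map, card_univ,
      Fintype.card_fin]
    exact h s
  obtain ⟨f, hf, hft⟩ := (all_card_le_biUnion_card_iff_exists_injective t').mp hall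
  refine ⟨univ.filter fun i => (f i).isLeft, ?_, fun i => (f i).getLeft (mem_filter.mp i.2).2,
    fun i j hij => Subtype.ext (hf ?_), fun i => ?_⟩
  · have hright :
        #(univ.filter fun i => ¬(f i).isLeft) ≤ #(univ.map (.inr : Fin d ↪ α ⊕ Fin d)) :=
      card_le_card_of_injOn f (fun i hi => by
        obtain ⟨k, hk⟩ := Sum.isRight_iff.mp (by simpa using (mem_filter.mp hi).2)
        simp [hk]) hf.injOn
    have hsplit := card_filter_add_card_filter_not (s := univ) fun i => (f i).isLeft
    simp only [card_map, card_univ, Fintype.card_fin] at hright hsplit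
    omega
  · exact ((Sum.getLeft_eq_iff _).mp hij).trans (Sum.inl_getLeft _ _)
  · obtain ⟨a, ha⟩ := Sum.isLeft_iff.mp (mem_filter.mp i.2).2
    have hi := hft i
    rw [ha] at hi
    dsimp only
    rw [(Sum.getLeft_eq_iff _).mpr ha]
    simpa [t'] using hi

end Finset

namespace SimpleGraph

variable {G : SimpleGraph V} {X : Set V}

def IsCrossMatching (G : SimpleGraph V) (X : Set V) (M : Finset (Sym2 V)) : Prop :=
  (∀ e ∈ M, e ∈ G.edgeSet ∧ ∃ x ∈ X, ∃ y ∈ Xᶜ, e = s(x, y)) ∧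
    (M : Set (Sym2 V)).Pairwise fun e f => ∀ v, v ∈ e → v ∉ f

theorem IsCrossMatching.mono {M N : Finset (Sym2 V)} (hM : G.IsCrossMatching X M) (hNM : N ⊆ M) :
    G.IsCrossMatching X N :=
  ⟨fun e he => hM.1 e (hNM he), hM.2.mono (coe_subset.mpr hNM)⟩

theorem exists_isCrossMatching_card_eq {ι : Type*} [Fintype ι] {g f : ι → V}
    (hg : Function.Injective g) (hf : Function.Injective f) (hgX : ∀ i, g i ∈ X)
    (hfX : ∀ i, f i ∉ X) (hadj : ∀ i, G.Adj (g i) (f i)) :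
    ∃ M : Finset (Sym2 V), #M = Fintype.card ι ∧ G.IsCrossMatching X M := by
  classical
  have hgf : ∀ i j, g i ≠ f j := fun i j h => hfX j (h ▸ hgX i)
  refine ⟨univ.image fun i => s(g i, f i), ?_, ?_, ?_⟩
  · rw [card_image_of_injective _ fun i j hij => ?_, card_univ]
    rcases Sym2.eq_iff.mp hij with ⟨h, -⟩ | ⟨h, -⟩
    · exact hg h
    · exact absurd h (hgf i j)
  · simp only [mem_image, mem_univ, true_and, forall_exists_index, forall_apply_eq_imp_iff]
    exact fun i => ⟨hadj i, g i, hgX i, f i, hfX i, rfl⟩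
  · simp only [coe_image, coe_univ, Set.image_univ]
    rintro _ ⟨i, rfl⟩ _ ⟨j, rfl⟩ hne v hvi hvj
    have hij : i ≠ j := by rintro rfl; exact hne rfl
    rcases Sym2.mem_iff.mp hvi with rfl | rfl <;> rcases Sym2.mem_iff.mp hvj with h | h
    · exact hij (hg h)
    · exact hgf i j h
    · exact hgf j i h.symm
    · exact hij (hf h)

variable [Fintype V]

noncomputable def crossNeighborFinset (G : SimpleGraph V) (X : Set V) (x : V) : Finset V := by
  classical exact univ.filter fun y => y ∉ X ∧ G.Adj x y

theorem mem_crossNeighborFinset {x y : V} :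
    y ∈ G.crossNeighborFinset X x ↔ y ∉ X ∧ G.Adj x y := by
  classical
  simp [crossNeighborFinset]

end SimpleGraph

open SimpleGraph

variable [Fintype V] {G : SimpleGraph V} {m : ℕ}

theorem IsKConnected.exists_adj_of_ncard_lt (hG : IsKConnected G m) {S X : Set V}
    (hS : S.ncard < m) {a b : V} (ha : a ∈ X) (haS : a ∉ S) (hb : b ∉ X) (hbS : b ∉ S) :
    ∃ u ∈ X, u ∉ S ∧ ∃ v ∉ X, v ∉ S ∧ G.Adj u v := by
  obtain ⟨w⟩ := (hG.2 S hS).preconnected ⟨a, haS⟩ ⟨b, hbS⟩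
  obtain ⟨d, -, hd₁, hd₂⟩ := w.exists_boundary_dart {z | z.1 ∈ X} ha hb
  exact ⟨d.fst, hd₁, d.fst.2, d.snd, hd₂, d.snd.2, d.adj⟩

theorem IsKConnected.card_le_card_biUnion_crossNeighborFinset_add [DecidableEq V]
    (hG : IsKConnected G m) {X : Set V} (hXc : m ≤ Xᶜ.ncard) (A : Finset X) :
    #A ≤ #(A.biUnion fun x => G.crossNeighborFinset X x) + (X.ncard - m) := by
  classical
  set N := A.biUnion fun x => G.crossNeighborFinset X x
  by_contra! hlt
  have hAX : #A ≤ X.ncard := (card_le_univ A).trans_eq (by rw [← Nat.card_eq_fintype_card,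
    Nat.card_coe_set_eq])
  set S : Set V := ↑N ∪ (X \ Subtype.val '' (A : Set X))
  have hS : S.ncard < m := by
    have hdiff : (X \ Subtype.val '' (A : Set X)).ncard = X.ncard - #A := by
      rw [Set.ncard_sdiff (by simp), Set.ncard_image_of_injective _ Subtype.val_injective,
        Set.ncard_coe_finset]
    have : S.ncard ≤ _ := Set.ncard_union_le (↑N : Set V) (X \ Subtype.val '' (A : Set X))
    rw [Set.ncard_coe_finset, hdiff] at this
    omega
  obtain ⟨a, haA⟩ : A.Nonempty := card_pos.mp (by omega)
  obtain ⟨b, hbX, hbN⟩ : ∃ b ∈ Xᶜ, b ∉ (↑N : Set V) :=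
    Set.exists_mem_notMem_of_ncard_lt_ncard (by rw [Set.ncard_coe_finset]; omega)
  obtain ⟨u, huX, huS, v, hvX, hvS, huv⟩ := hG.exists_adj_of_ncard_lt hS (X := X) a.2
    (by rintro (h | ⟨-, h⟩) <;> simp_all [N, mem_crossNeighborFinset])
    hbX (by rintro (h | ⟨h, -⟩) <;> contradiction)
  obtain ⟨x, hxA, rfl⟩ : u ∈ Subtype.val '' (A : Set X) := by
    by_contra h
    exact huS (Or.inr ⟨huX, h⟩)
  exact hvS (Or.inl (mem_biUnion.mpr ⟨x, hxA, mem_crossNeighborFinset.mpr ⟨hvX, huv⟩⟩))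

/-- In an `m`-connected graph, for any `X` with `|X| ≥ m` and `|V \ X| ≥ m`, the set of
edges with exactly one endpoint in `X` contains `m` pairwise disjoint edges. -/
theorem stmt12 {V : Type*} [Fintype V] (G : SimpleGraph V) (m : ℕ)
    (hconn : IsKConnected G m) (X : Set V) (hX : m ≤ X.ncard) (hXc : m ≤ Xᶜ.ncard) :
    ∃ M : Finset (Sym2 V), M.card = m ∧
      (∀ e ∈ M, e ∈ G.edgeSet ∧ ∃ x ∈ X, ∃ y ∈ Xᶜ, e = s(x, y)) ∧
      (M : Set (Sym2 V)).Pairwise (fun e f => ∀ v, v ∈ e → v ∉ f) := by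
  classical
  obtain ⟨s, hs, f, hf, hfX⟩ := exists_injective_of_card_le_card_biUnion_add _ _
    (hconn.card_le_card_biUnion_crossNeighborFinset_add hXc)
  obtain ⟨M₀, hM₀, hM₀X⟩ := exists_isCrossMatching_card_eq (G := G) (X := X)
    (g := fun x : s => x.1.1) (Subtype.val_injective.comp Subtype.val_injective) hf
    (fun x => x.1.2) (fun x => (mem_crossNeighborFinset.mp (hfX x)).1)
    (fun x => (mem_crossNeighborFinset.mp (hfX x)).2)
  have hXcard : Fintype.card X = X.ncard := by
    rw [← Nat.card_eq_fintype_card, Nat.card_coe_set_eq]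
  obtain ⟨M, hMM₀, hM⟩ := exists_subset_card_eq (s := M₀) (n := m)
    (by rw [hM₀, Fintype.card_coe]; omega)
  exact ⟨M, hM, hM₀X.mono hMM₀⟩
end

section
/- Let G be a k-regular finite simple connected super-λ'' graph with k ≥ 4 whose girth is at least 4. Then G is super-λ' and ρ'(G) = k − 1. -/
open SimpleGraph

variable {V : Type*}

/-!
Let `H = G - F` with `t = |F| ≤ k - 1`, and let `f(v)` count the edges of `F` at `v`, so that
`d_H(v) = k - f(v)`. As `G` is triangle-free, every connected 3-set of `G` induces a path and has
`3k - 4` boundary edges; so `λ''(G) = 3k - 4`, and a 2-extra cut of that size is the boundary of a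
path on 3 vertices. Every vertex keeps a neighbour in `H`, so a disconnection of `H` would be a
1-extra cut of `G` with fewer than `2k - 2` edges, which the same dichotomy rules out.

Take an edge `xy` of `H` realising `ξ(H)`. Its boundary is a 1-extra cut of `H`: a vertex `u`
outside `{x, y}` with no other neighbour would have `d_H(u) = 1` (no triangles), and comparing
edge degrees would make both `u` and the vertex of `{x, y}` not adjacent to it carry `k - 1` edges
of `F`, at most one of them shared. Conversely, if a 1-extra cut `F'` of `H` leaves only components
of at least 3 vertices, `F ∪ F'` is a 2-extra cut of `G`, so `t + |F'| ≥ 3k - 4`. Since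
`ξ(H) ≤ 2k - 3` as soon as `t ≥ 1`, `|F'| ≤ ξ(H)` forces `t = k - 1` and `F ∪ F'` to be the
boundary of a path `abc` of `H`. Every edge of `F` then meets the path, while minimality of `ξ(H)`
gives `f(a) + f(b) ≤ 1` and `f(b) + f(c) ≤ 1`, so `t ≤ 2`.

Hence `G - F` is super-`λ'` whenever `|F| ≤ k - 1`, whereas deleting the `k` edges at a vertex
isolates it.
-/

namespace SimpleGraph

variable {G : SimpleGraph V}

lemma not_adj_of_four_le_egirth (hg : 4 ≤ G.egirth) {a b c : V} (hab : G.Adj a b)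
    (hbc : G.Adj b c) (hac : a ≠ c) : ¬ G.Adj a c := by
  intro hca
  have hcyc : (Walk.cons hab (Walk.cons hbc (Walk.cons hca.symm Walk.nil))).IsCycle :=
    { edges_nodup := by aesop
      ne_nil := by aesop
      support_nodup := by aesop }
  have := hg.trans (egirth_le_length hcyc)
  norm_num at this

lemma exists_adj_of_degN_pos {v : V} (hv : 0 < degN G v) : ∃ w, G.Adj v w :=
  Set.nonempty_of_ncard_ne_zero hv.ne'

lemma exists_adj_mem_of_induce_connected {X : Set V} (hX : (G.induce X).Connected) {u w : V}
    (hu : u ∈ X) (hw : w ∈ X) (huw : u ≠ w) : ∃ v ∈ X, G.Adj u v := by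
  obtain ⟨⟨v, hv⟩, huv⟩ := mem_support_of_reachable (u := ⟨u, hu⟩) (v := ⟨w, hw⟩)
    (by simpa using huw) (hX.preconnected _ _)
  exact ⟨v, hv, huv⟩

lemma exists_eq_pair_of_induce_connected {X : Set V} (hX : (G.induce X).Connected)
    (hcard : X.ncard = 2) : ∃ x y, X = {x, y} ∧ G.Adj x y := by
  obtain ⟨x, y, hxy, rfl⟩ := Set.ncard_eq_two.mp hcard
  obtain ⟨v, hv, hxv⟩ := exists_adj_mem_of_induce_connected hX (by simp) (by simp) hxy
  rcases hv with rfl | rfl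
  exacts [(G.irrefl hxv).elim, ⟨x, v, rfl, hxv⟩]

lemma exists_eq_path_of_induce_connected {X : Set V} (hX : (G.induce X).Connected)
    (hcard : X.ncard = 3) :
    ∃ a b c, X = {a, b, c} ∧ a ≠ c ∧ G.Adj a b ∧ G.Adj b c := by
  obtain ⟨x, y, z, hxy, hxz, hyz, rfl⟩ := Set.ncard_eq_three.mp hcard
  have nbr : ∀ u ∈ ({x, y, z} : Set V), ∀ w ∈ ({x, y, z} : Set V), u ≠ w →
      ∃ v ∈ ({x, y, z} : Set V), v ≠ u ∧ G.Adj u v := fun u hu w hw huw ↦ by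
    obtain ⟨v, hv, huv⟩ := exists_adj_mem_of_induce_connected hX hu hw huw
    exact ⟨v, hv, huv.ne.symm, huv⟩
  obtain ⟨v, hv, hvx, hxv⟩ := nbr x (by simp) y (by simp) hxy
  rcases hv with rfl | rfl | rfl
  · exact absurd rfl hvx
  · obtain ⟨u, hu, huz, hzu⟩ := nbr z (by simp) x (by simp) hxz.symm
    rcases hu with rfl | rfl | rfl
    · exact ⟨z, u, v, by ext; simp; tauto, hyz.symm, hzu, hxv⟩
    · exact ⟨x, u, z, rfl, hxz, hxv, hzu.symm⟩
    · exact absurd rfl huz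
  · obtain ⟨u, hu, huy, hyu⟩ := nbr y (by simp) x (by simp) hxy.symm
    rcases hu with rfl | rfl | rfl
    · exact ⟨y, u, v, by ext; simp; tauto, hyz, hyu, hxv⟩
    · exact absurd rfl huy
    · exact ⟨x, u, y, by ext; simp; tauto, hxy, hxv, hyu.symm⟩

lemma induce_path_connected {a b c : V} (hab : G.Adj a b) (hbc : G.Adj b c) :
    (G.induce {a, b, c}).Connected := by
  have := induce_union_connected (induce_pair_connected_of_adj hab).preconnected
    (induce_pair_connected_of_adj hbc).preconnected ⟨b, by simp, by simp⟩
  rwa [Set.insert_union, Set.singleton_union, Set.insert_eq_of_mem (Set.mem_insert b {c})] at this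

lemma ncard_incidenceSet (v : V) : (G.incidenceSet v).ncard = degN G v := by
  classical
  exact Nat.card_congr (G.incidenceSetEquivNeighborSet v)

lemma not_connected_deleteEdges_incidenceSet {u v : V} (huv : u ≠ v) :
    ¬ (G.deleteEdges (G.incidenceSet v)).Connected := fun h ↦ by
  obtain ⟨w, hw⟩ := mem_support_of_reachable huv.symm (h.preconnected v u)
  exact (deleteIncidenceSet_adj.mp hw).2.1 rfl

def edgeBoundary (G : SimpleGraph V) (X : Set V) : Set (Sym2 V) :=
  {e ∈ G.edgeSet | ∃ x ∈ X, ∃ y ∈ Xᶜ, e = s(x, y)}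

lemma dOut_eq_ncard_edgeBoundary (X : Set V) : dOut G X = (G.edgeBoundary X).ncard := rfl

lemma mk_mem_edgeBoundary {X : Set V} {a b : V} :
    s(a, b) ∈ G.edgeBoundary X ↔ G.Adj a b ∧ (a ∈ X ∧ b ∉ X ∨ b ∈ X ∧ a ∉ X) := by
  simp only [edgeBoundary, Set.mem_ofPred_eq, mem_edgeSet, Set.mem_compl_iff, Sym2.eq_iff]
  aesop

lemma edgeBoundary_eq_biUnion (X : Set V) :
    G.edgeBoundary X = ⋃ x ∈ X, (fun y ↦ s(x, y)) '' (G.neighborSet x \ X) := by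
  ext e
  induction e with
  | _ a b =>
    simp only [mk_mem_edgeBoundary, Set.mem_iUnion, Set.mem_image, Set.mem_sdiff, mem_neighborSet,
      Sym2.eq_iff]
    constructor
    · rintro ⟨hab, ⟨ha, hb⟩ | ⟨hb, ha⟩⟩
      · exact ⟨a, ha, b, ⟨hab, hb⟩, Or.inl ⟨rfl, rfl⟩⟩
      · exact ⟨b, hb, a, ⟨hab.symm, ha⟩, Or.inr ⟨rfl, rfl⟩⟩
    · rintro ⟨x, hx, y, ⟨hxy, hy⟩, ⟨rfl, rfl⟩ | ⟨rfl, rfl⟩⟩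
      · exact ⟨hxy, Or.inl ⟨hx, hy⟩⟩
      · exact ⟨hxy.symm, Or.inr ⟨hx, hy⟩⟩

lemma edgeBoundary_subset_biUnion_incidenceSet (X : Set V) :
    G.edgeBoundary X ⊆ ⋃ x ∈ X, G.incidenceSet x := by
  rw [edgeBoundary_eq_biUnion]
  refine Set.biUnion_mono subset_rfl fun x _ ↦ ?_
  rintro _ ⟨y, ⟨hxy, -⟩, rfl⟩
  exact (G.mem_incidenceSet x y).mpr hxy

lemma not_connected_deleteEdges_edgeBoundary {X : Set V} {x u : V} (hx : x ∈ X) (hu : u ∉ X) :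
    ¬ (G.deleteEdges (G.edgeBoundary X)).Connected := fun h ↦ by
  obtain ⟨d, -, hd, hd'⟩ := (h.preconnected x u).some.exists_boundary_dart X hx hu
  obtain ⟨hadj, hnot⟩ := deleteEdges_adj.mp d.adj
  exact hnot (G.mk_mem_edgeBoundary.mpr ⟨hadj, .inl ⟨hd, hd'⟩⟩)

section Finite

variable [Finite V]

lemma degN_deleteEdges_add (G : SimpleGraph V) (F : Set (Sym2 V)) (v : V) :
    degN (G.deleteEdges F) v + (F ∩ G.incidenceSet v).ncard = degN G v := by
  have hN : (G.deleteEdges F).neighborSet v = G.neighborSet v \ {w | s(v, w) ∈ F} := by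
    ext w; simp [deleteEdges_adj]
  have hI : F ∩ G.incidenceSet v = (fun w ↦ s(v, w)) '' (G.neighborSet v ∩ {w | s(v, w) ∈ F}) := by
    ext e
    constructor
    · rintro ⟨heF, heE, hve⟩
      rw [← Sym2.other_spec hve] at heF heE ⊢
      exact ⟨_, ⟨heE, heF⟩, rfl⟩
    · rintro ⟨w, ⟨hvw, hF⟩, rfl⟩
      exact ⟨hF, hvw, Sym2.mem_mk_left v w⟩
  rw [degN, degN, hN, hI, Set.ncard_image_of_injective _ fun _ _ ↦ Sym2.congr_right.mp, add_comm]
  exact Set.ncard_inter_add_ncard_sdiff_eq_ncard _ _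

lemma sub_ncard_le_degN_deleteEdges (G : SimpleGraph V) (F : Set (Sym2 V)) (v : V) :
    degN G v - F.ncard ≤ degN (G.deleteEdges F) v := by
  have := degN_deleteEdges_add G F v
  have := Set.ncard_le_ncard (Set.inter_subset_left : F ∩ G.incidenceSet v ⊆ F)
  omega

lemma ncard_inter_incidenceSet_add_le (F : Set (Sym2 V)) {u v : V} (huv : u ≠ v) :
    (F ∩ G.incidenceSet u).ncard + (F ∩ G.incidenceSet v).ncard ≤ F.ncard + 1 := by
  rw [← Set.ncard_union_add_ncard_inter]
  refine add_le_add (Set.ncard_le_ncard (Set.union_subset Set.inter_subset_left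
    Set.inter_subset_left)) ?_
  calc (F ∩ G.incidenceSet u ∩ (F ∩ G.incidenceSet v)).ncard
      ≤ ({s(u, v)} : Set (Sym2 V)).ncard :=
        Set.ncard_le_ncard fun e he ↦ G.incidenceSet_inter_incidenceSet_subset huv ⟨he.1.2, he.2.2⟩
    _ = 1 := Set.ncard_singleton _

lemma ncard_le_sum_of_subset_edgeBoundary (F : Set (Sym2 V)) {a b c : V}
    (hF : F ⊆ G.edgeBoundary {a, b, c}) : F.ncard ≤ (F ∩ G.incidenceSet a).ncard +
      (F ∩ G.incidenceSet b).ncard + (F ∩ G.incidenceSet c).ncard := by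
  have hcover : F ⊆ (F ∩ G.incidenceSet a) ∪ (F ∩ G.incidenceSet b) ∪ (F ∩ G.incidenceSet c) :=
    fun e he ↦ by
      have := edgeBoundary_subset_biUnion_incidenceSet _ (hF he)
      simp only [Set.mem_insert_iff, Set.mem_singleton_iff, Set.iUnion_iUnion_eq_or_left,
        Set.iUnion_iUnion_eq_left, Set.mem_union] at this
      simp only [Set.mem_union, Set.mem_inter_iff]
      tauto
  calc F.ncard ≤ _ := Set.ncard_le_ncard hcover
    _ ≤ _ := (Set.ncard_union_le _ _).trans (Nat.add_le_add_right (Set.ncard_union_le _ _) _)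

lemma dOut_add_sum_ncard_inter (s : Finset V) :
    dOut G s + ∑ x ∈ s, (G.neighborSet x ∩ s).ncard = ∑ x ∈ s, degN G x := by
  have hdisj : (s : Set V).PairwiseDisjoint fun x ↦ (fun y ↦ s(x, y)) '' (G.neighborSet x \ s) := by
    rintro x hx x' - hne
    refine Set.disjoint_left.mpr ?_
    rintro _ ⟨y, -, rfl⟩ ⟨y', hy', h⟩
    rcases Sym2.eq_iff.mp h with ⟨rfl, -⟩ | ⟨-, rfl⟩
    exacts [hne rfl, hy'.2 hx]
  rw [dOut_eq_ncard_edgeBoundary, edgeBoundary_eq_biUnion,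
    Set.Finite.ncard_biUnion s.finite_toSet (fun _ _ ↦ Set.toFinite _) hdisj,
    finsum_mem_coe_finset, ← Finset.sum_add_distrib]
  refine Finset.sum_congr rfl fun x _ ↦ ?_
  rw [Set.ncard_image_of_injective _ fun _ _ ↦ Sym2.congr_right.mp, add_comm]
  exact Set.ncard_inter_add_ncard_sdiff_eq_ncard _ _

lemma dOut_pair {x y : V} (hxy : G.Adj x y) : dOut G {x, y} + 2 = degN G x + degN G y := by
  classical
  have h := dOut_add_sum_ncard_inter (G := G) {x, y}
  have hx : G.neighborSet x ∩ {x, y} = {y} := by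
    ext w; simp only [Set.mem_inter_iff, mem_neighborSet, Set.mem_insert_iff, Set.mem_singleton_iff]
    aesop
  have hyx := hxy.symm
  have hy : G.neighborSet y ∩ {x, y} = {x} := by
    ext w; simp only [Set.mem_inter_iff, mem_neighborSet, Set.mem_insert_iff, Set.mem_singleton_iff]
    aesop
  rw [Finset.sum_pair hxy.ne, Finset.sum_pair hxy.ne] at h
  push_cast at h
  rw [hx, hy] at h
  simpa using h

lemma dOut_path {a b c : V} (hab : G.Adj a b) (hbc : G.Adj b c) (hac : a ≠ c)
    (hnac : ¬ G.Adj a c) : dOut G {a, b, c} + 4 = degN G a + degN G b + degN G c := by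
  classical
  have h := dOut_add_sum_ncard_inter (G := G) {a, b, c}
  have hba := hab.symm
  have hcb := hbc.symm
  have hnca : ¬ G.Adj c a := fun h ↦ hnac h.symm
  have ha : G.neighborSet a ∩ {a, b, c} = {b} := by
    ext w; simp only [Set.mem_inter_iff, mem_neighborSet, Set.mem_insert_iff, Set.mem_singleton_iff]
    aesop
  have hb : G.neighborSet b ∩ {a, b, c} = {a, c} := by
    ext w; simp only [Set.mem_inter_iff, mem_neighborSet, Set.mem_insert_iff, Set.mem_singleton_iff]
    aesop
  have hc : G.neighborSet c ∩ {a, b, c} = {b} := by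
    ext w; simp only [Set.mem_inter_iff, mem_neighborSet, Set.mem_insert_iff, Set.mem_singleton_iff]
    aesop
  rw [Finset.sum_insert (by simp [hab.ne, hac]), Finset.sum_pair hbc.ne,
    Finset.sum_insert (by simp [hab.ne, hac]), Finset.sum_pair hbc.ne] at h
  push_cast at h
  rw [ha, hb, hc, Set.ncard_pair hac] at h
  simp only [Set.ncard_singleton] at h
  omega

end Finite

end SimpleGraph

section ExtraEdgeCut

variable {G : SimpleGraph V} {F : Set (Sym2 V)}

lemma edgeBoundary_supp_subset (c : (G.deleteEdges F).ConnectedComponent) :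
    G.edgeBoundary c.supp ⊆ F := by
  intro e he
  induction e with
  | _ a b =>
    by_contra heF
    obtain ⟨hab, hside⟩ := G.mk_mem_edgeBoundary.mp he
    have := c.mem_supp_congr_adj (deleteEdges_adj.mpr ⟨hab, heF⟩)
    tauto

lemma induce_supp_connected (c : (G.deleteEdges F).ConnectedComponent) :
    (G.induce c.supp).Connected :=
  c.maximal_connected_induce_supp.1.mono fun _ _ h ↦ G.deleteEdges_le F h

lemma lambdaH_le {h : ℕ} (hF : IsExtraEdgeCut G h F) : lambdaH G h ≤ F.ncard :=
  Nat.sInf_le ⟨F, hF, rfl⟩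

lemma xiH_le_dOut {h : ℕ} {X : Set V} (hX : X.ncard = h + 1) (hconn : (G.induce X).Connected) :
    xiH G h ≤ dOut G X :=
  Nat.sInf_le ⟨X, hX, hconn, rfl⟩

lemma exists_dOut_eq_xiH {h : ℕ} {X : Set V} (hX : X.ncard = h + 1)
    (hconn : (G.induce X).Connected) :
    ∃ Y : Set V, Y.ncard = h + 1 ∧ (G.induce Y).Connected ∧ dOut G Y = xiH G h := by
  have hne : {m | ∃ Y : Set V, Y.ncard = h + 1 ∧ (G.induce Y).Connected ∧ dOut G Y = m}.Nonempty :=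
    ⟨_, X, hX, hconn, rfl⟩
  exact Nat.sInf_mem hne

lemma IsExtraEdgeCut.union_of_deleteEdges {h : ℕ} {F' : Set (Sym2 V)} (hF : F ⊆ G.edgeSet)
    (hcut : IsExtraEdgeCut (G.deleteEdges F) h F') : IsExtraEdgeCut G h (F ∪ F') := by
  refine ⟨Set.union_subset hF (hcut.1.trans (edgeSet_mono (G.deleteEdges_le F))), ?_⟩
  rw [← deleteEdges_deleteEdges]
  exact hcut.2

lemma IsExtraEdgeCut.exists_supp_eq_or_succ {h : ℕ} (hF : IsExtraEdgeCut G h F) :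
    (∃ c : (G.deleteEdges F).ConnectedComponent, c.supp.ncard = h + 1) ∨
      IsExtraEdgeCut G (h + 1) F :=
  or_iff_not_imp_left.mpr fun hc ↦
    ⟨hF.1, hF.2.1, fun c ↦ lt_of_le_of_ne (hF.2.2 c) fun h ↦ hc ⟨c, h.symm⟩⟩

variable [Finite V]

lemma dOut_supp_le (c : (G.deleteEdges F).ConnectedComponent) : dOut G c.supp ≤ F.ncard :=
  Set.ncard_le_ncard (edgeBoundary_supp_subset c)

lemma edgeBoundary_supp_eq (c : (G.deleteEdges F).ConnectedComponent)
    (hc : F.ncard ≤ dOut G c.supp) :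
    G.edgeBoundary c.supp = F :=
  Set.eq_of_subset_of_ncard_le (edgeBoundary_supp_subset c) hc

lemma xiH_le_ncard_of_supp {h : ℕ} (c : (G.deleteEdges F).ConnectedComponent)
    (hc : c.supp.ncard = h + 1) : xiH G h ≤ F.ncard :=
  (xiH_le_dOut hc (induce_supp_connected c)).trans (dOut_supp_le c)

lemma xiH_one_add_two_le {u v : V} (huv : G.Adj u v) : xiH G 1 + 2 ≤ degN G u + degN G v := by
  have := xiH_le_dOut (Set.ncard_pair huv.ne) (induce_pair_connected_of_adj huv)
  have := dOut_pair huv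
  omega

lemma isExtraEdgeCut_one_of_forall_exists_adj (hF : F ⊆ G.edgeSet)
    (hdis : ¬ (G.deleteEdges F).Connected) (hadj : ∀ v, ∃ w, (G.deleteEdges F).Adj v w) :
    IsExtraEdgeCut G 1 F := by
  refine ⟨hF, hdis, fun c ↦ ?_⟩
  obtain ⟨v, rfl⟩ := c.exists_rep
  obtain ⟨w, hvw⟩ := hadj v
  exact (Set.one_lt_ncard (Set.toFinite _)).mpr
    ⟨v, rfl, w, (ConnectedComponent.mem_supp_congr_adj _ hvw).mp rfl, hvw.ne⟩

lemma isExtraEdgeCut_one_edgeBoundary {X : Set V} {x u : V} (hx : x ∈ X) (hu : u ∉ X)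
    (hside : ∀ v, ∃ w, G.Adj v w ∧ (v ∈ X ↔ w ∈ X)) : IsExtraEdgeCut G 1 (G.edgeBoundary X) := by
  refine isExtraEdgeCut_one_of_forall_exists_adj (fun _ he ↦ he.1)
    (not_connected_deleteEdges_edgeBoundary hx hu) fun v ↦ ?_
  obtain ⟨w, hvw, hvw'⟩ := hside v
  refine ⟨w, deleteEdges_adj.mpr ⟨hvw, fun h ↦ ?_⟩⟩
  have := (G.mk_mem_edgeBoundary.mp h).2
  tauto

lemma superLambda_of_forall_lt {h : ℕ} {F₀ : Set (Sym2 V)} (hconn : G.Connected)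
    (hF₀ : IsExtraEdgeCut G h F₀) (hF₀card : F₀.ncard ≤ xiH G h)
    (hlarge : ∀ F, IsExtraEdgeCut G (h + 1) F → xiH G h < F.ncard) : SuperLambda G h := by
  have small_or_large : ∀ F, IsExtraEdgeCut G h F →
      (∃ c : (G.deleteEdges F).ConnectedComponent, c.supp.ncard = h + 1) ∨
        xiH G h < F.ncard :=
    fun F hF ↦ hF.exists_supp_eq_or_succ.imp_right (hlarge F)
  have hlam : lambdaH G h = xiH G h := by
    refine le_antisymm ((lambdaH_le hF₀).trans hF₀card) (le_csInf ⟨_, F₀, hF₀, rfl⟩ ?_)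
    rintro _ ⟨F, hF, rfl⟩
    rcases small_or_large F hF with ⟨c, hc⟩ | hlt
    exacts [xiH_le_ncard_of_supp c hc, hlt.le]
  refine ⟨hconn, ⟨F₀, hF₀⟩, hlam, fun F hF hmin ↦ ?_⟩
  exact (small_or_large F hF).resolve_right (by omega)

end ExtraEdgeCut

section Regular

variable [Finite V] {G : SimpleGraph V} {k : ℕ} {F : Set (Sym2 V)}

lemma xiH_two_eq [Nonempty V] (hk : 2 ≤ k) (hreg : ∀ v, degN G v = k) (hg : 4 ≤ G.egirth) :
    xiH G 2 = 3 * k - 4 := by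
  have dOut_eq : ∀ {a b c : V}, G.Adj a b → G.Adj b c → a ≠ c → dOut G {a, b, c} = 3 * k - 4 := by
    intro a b c hab hbc hac
    have := dOut_path hab hbc hac (not_adj_of_four_le_egirth hg hab hbc hac)
    rw [hreg, hreg, hreg] at this
    omega
  obtain ⟨v⟩ := ‹Nonempty V›
  obtain ⟨a, ha, c, hc, hac⟩ := (Set.one_lt_ncard (Set.toFinite _)).mp
    (show 1 < degN G v by rw [hreg]; omega)
  obtain ⟨X, hX, hXconn, hXmin⟩ := exists_dOut_eq_xiH
    (Set.ncard_eq_three.mpr ⟨a, v, c, (G.adj_symm ha).ne, hac, G.ne_of_adj hc, rfl⟩)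
    (induce_path_connected (G.adj_symm ha) hc)
  obtain ⟨a, b, c, rfl, hac, hab, hbc⟩ := exists_eq_path_of_induce_connected hXconn hX
  rw [← hXmin, dOut_eq hab hbc hac]

lemma lambdaH_two_eq (hk : 2 ≤ k) (hreg : ∀ v, degN G v = k) (hg : 4 ≤ G.egirth)
    (hs : SuperLambda G 2) : lambdaH G 2 = 3 * k - 4 :=
  haveI := hs.1.nonempty
  hs.2.2.1.trans (xiH_two_eq hk hreg hg)

lemma two_mul_sub_two_le_ncard_of_isExtraEdgeCut_one (hk : 2 ≤ k) (hreg : ∀ v, degN G v = k)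
    (hg : 4 ≤ G.egirth) (hs : SuperLambda G 2) (hF : IsExtraEdgeCut G 1 F) :
    2 * k - 2 ≤ F.ncard := by
  rcases hF.exists_supp_eq_or_succ with ⟨c, hc⟩ | hF₂
  · obtain ⟨x, y, hxy_eq, hxy⟩ := exists_eq_pair_of_induce_connected (induce_supp_connected c) hc
    have h₁ := dOut_supp_le c
    have h₂ := dOut_pair hxy
    rw [hxy_eq] at h₁
    rw [hreg, hreg] at h₂
    omega
  · have := lambdaH_le hF₂
    rw [lambdaH_two_eq hk hreg hg hs] at this
    omega

lemma exists_adj_deleteEdges (hreg : ∀ v, degN G v = k) (ht : F.ncard < k)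
    (v : V) : ∃ w, (G.deleteEdges F).Adj v w := by
  have := sub_ncard_le_degN_deleteEdges G F v
  rw [hreg] at this
  exact exists_adj_of_degN_pos (by omega)

lemma connected_deleteEdges_of_ncard_lt (hk : 2 ≤ k) (hreg : ∀ v, degN G v = k) (hg : 4 ≤ G.egirth)
    (hs : SuperLambda G 2) (hF : F ⊆ G.edgeSet) (ht : F.ncard < k) :
    (G.deleteEdges F).Connected := by
  by_contra hdis
  have := two_mul_sub_two_le_ncard_of_isExtraEdgeCut_one hk hreg hg hs
    (isExtraEdgeCut_one_of_forall_exists_adj hF hdis (exists_adj_deleteEdges hreg ht))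
  omega

lemma xiH_deleteEdges_add_two_le [Nonempty V] (hreg : ∀ v, degN G v = k) (ht : F.ncard < k) :
    xiH (G.deleteEdges F) 1 + 2 ≤ 2 * k := by
  obtain ⟨v⟩ := ‹Nonempty V›
  obtain ⟨w, hvw⟩ := exists_adj_deleteEdges hreg ht v
  have := xiH_one_add_two_le hvw
  have := degN_deleteEdges_add G F v
  have := degN_deleteEdges_add G F w
  rw [hreg] at *
  omega

lemma xiH_deleteEdges_add_three_le (hreg : ∀ v, degN G v = k) (hF : F ⊆ G.edgeSet)
    (ht : F.ncard < k) (hne : F.Nonempty) : xiH (G.deleteEdges F) 1 + 3 ≤ 2 * k := by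
  obtain ⟨e, he⟩ := hne
  obtain ⟨a, b⟩ := e
  obtain ⟨c, hac⟩ := exists_adj_deleteEdges hreg ht a
  have ha : 0 < (F ∩ G.incidenceSet a).ncard :=
    (Set.ncard_pos (Set.toFinite _)).mpr ⟨_, he, hF he, Sym2.mem_mk_left a b⟩
  have := xiH_one_add_two_le hac
  have := degN_deleteEdges_add G F a
  have := degN_deleteEdges_add G F c
  rw [hreg] at *
  omega

lemma exists_adj_ne_ne_of_dOut_eq_xiH (hk : 3 ≤ k) (hreg : ∀ v, degN G v = k)
    (hg : 4 ≤ G.egirth) (ht : F.ncard ≤ k - 1) {x y u : V} (hxy : (G.deleteEdges F).Adj x y)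
    (hmin : dOut (G.deleteEdges F) {x, y} = xiH (G.deleteEdges F) 1)
    (hux : (G.deleteEdges F).Adj u x) (huy : u ≠ y) :
    ∃ w, w ≠ x ∧ w ≠ y ∧ (G.deleteEdges F).Adj u w := by
  by_contra! hno
  have hNu : (G.deleteEdges F).neighborSet u ⊆ {x} := fun w huw ↦ by
    by_contra hwx
    refine hno w hwx (fun hwy ↦ ?_) huw
    subst hwy
    exact not_adj_of_four_le_egirth hg (G.deleteEdges_le F hux) (G.deleteEdges_le F hxy) huy
      (G.deleteEdges_le F huw)
  have hdu : degN (G.deleteEdges F) u ≤ 1 :=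
    (Set.ncard_le_ncard hNu).trans_eq (Set.ncard_singleton x)
  have := xiH_one_add_two_le hux
  have := dOut_pair hxy
  have hfu := degN_deleteEdges_add G F u
  have hfy := degN_deleteEdges_add G F y
  have := ncard_inter_incidenceSet_add_le (G := G) F huy
  rw [hreg] at hfu hfy
  omega

lemma exists_adj_notMem_of_dOut_eq_xiH (hk : 3 ≤ k) (hreg : ∀ v, degN G v = k)
    (hg : 4 ≤ G.egirth) (ht : F.ncard ≤ k - 1) {x y u : V} (hxy : (G.deleteEdges F).Adj x y)
    (hmin : dOut (G.deleteEdges F) {x, y} = xiH (G.deleteEdges F) 1)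
    (hu : u ∉ ({x, y} : Set V)) : ∃ w ∉ ({x, y} : Set V), (G.deleteEdges F).Adj u w := by
  simp only [Set.mem_insert_iff, Set.mem_singleton_iff, not_or] at hu ⊢
  obtain ⟨p, hup⟩ := exists_adj_deleteEdges hreg (show F.ncard < k by omega) u
  by_cases hpx : p = x
  · obtain ⟨w, hwx, hwy, huw⟩ :=
      exists_adj_ne_ne_of_dOut_eq_xiH hk hreg hg ht hxy hmin (hpx ▸ hup) hu.2
    exact ⟨w, ⟨hwx, hwy⟩, huw⟩
  by_cases hpy : p = y
  · obtain ⟨w, hwy, hwx, huw⟩ := exists_adj_ne_ne_of_dOut_eq_xiH hk hreg hg ht hxy.symm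
      (by rwa [Set.pair_comm]) (hpy ▸ hup) hu.1
    exact ⟨w, ⟨hwx, hwy⟩, huw⟩
  exact ⟨p, ⟨hpx, hpy⟩, hup⟩

lemma exists_isExtraEdgeCut_deleteEdges_ncard_le_xiH [Nonempty V] (hk : 3 ≤ k)
    (hreg : ∀ v, degN G v = k) (hg : 4 ≤ G.egirth) (ht : F.ncard ≤ k - 1) :
    ∃ F₀, IsExtraEdgeCut (G.deleteEdges F) 1 F₀ ∧ F₀.ncard ≤ xiH (G.deleteEdges F) 1 := by
  obtain ⟨v⟩ := ‹Nonempty V›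
  obtain ⟨w, hvw⟩ := exists_adj_deleteEdges hreg (show F.ncard < k by omega) v
  obtain ⟨X, hX, hXconn, hXmin⟩ :=
    exists_dOut_eq_xiH (Set.ncard_pair hvw.ne) (induce_pair_connected_of_adj hvw)
  obtain ⟨x, y, rfl, hxy⟩ := exists_eq_pair_of_induce_connected hXconn hX
  obtain ⟨u, -, hu⟩ := Set.exists_mem_notMem_of_ncard_lt_ncard
    (show ({x, y} : Set V).ncard < (G.neighborSet x).ncard by
      have := hreg x
      rw [Set.ncard_pair hxy.ne]
      unfold degN at this
      omega)
  refine ⟨_, isExtraEdgeCut_one_edgeBoundary (Set.mem_insert x {y}) hu fun v ↦ ?_, hXmin.le⟩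
  by_cases hv : v ∈ ({x, y} : Set V)
  · rcases hv with rfl | rfl
    exacts [⟨y, hxy, by simp⟩, ⟨x, hxy.symm, by simp⟩]
  · obtain ⟨w, hw, hvw⟩ := exists_adj_notMem_of_dOut_eq_xiH hk hreg hg ht hxy hXmin hv
    exact ⟨w, hvw, iff_of_false hv hw⟩

lemma ncard_le_two_of_subset_edgeBoundary (hreg : ∀ v, degN G v = k) {a b c : V}
    (hab : (G.deleteEdges F).Adj a b) (hbc : (G.deleteEdges F).Adj b c)
    (hxi : 2 * k ≤ xiH (G.deleteEdges F) 1 + 3) (hFX : F ⊆ G.edgeBoundary {a, b, c}) :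
    F.ncard ≤ 2 := by
  have := ncard_le_sum_of_subset_edgeBoundary F hFX
  have := xiH_one_add_two_le hab
  have := xiH_one_add_two_le hbc
  have := degN_deleteEdges_add G F a
  have := degN_deleteEdges_add G F b
  have := degN_deleteEdges_add G F c
  rw [hreg] at *
  omega

lemma xiH_deleteEdges_lt_ncard_of_isExtraEdgeCut_two (hk : 4 ≤ k) (hreg : ∀ v, degN G v = k)
    (hg : 4 ≤ G.egirth) (hs : SuperLambda G 2) (hF : F ⊆ G.edgeSet) (ht : F.ncard ≤ k - 1)
    {F' : Set (Sym2 V)} (hF' : IsExtraEdgeCut (G.deleteEdges F) 2 F') :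
    xiH (G.deleteEdges F) 1 < F'.ncard := by
  by_contra! hle
  have hcut := hF'.union_of_deleteEdges hF
  have hlam := lambdaH_two_eq (by omega) hreg hg hs
  have h₁ : 3 * k - 4 ≤ (F ∪ F').ncard := hlam ▸ lambdaH_le hcut
  have h₂ := Set.ncard_union_le F F'
  have := hs.1.nonempty
  have h₃ := xiH_deleteEdges_add_two_le hreg (show F.ncard < k by omega)
  have hne : F.Nonempty := Set.nonempty_of_ncard_ne_zero (by omega)
  have h₄ := xiH_deleteEdges_add_three_le hreg hF (by omega) hne
  -- the bounds force `t = k - 1` and `|F ∪ F'| = 3k - 4 = λ''(G)`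
  obtain ⟨c, hc⟩ := hs.2.2.2 _ hcut (by omega)
  obtain ⟨a, b, d, hX, -, hab, hbd⟩ :=
    exists_eq_path_of_induce_connected c.maximal_connected_induce_supp.1 hc
  have hbdry : G.edgeBoundary c.supp = F ∪ F' := by
    refine edgeBoundary_supp_eq c ?_
    have := xiH_le_dOut hc (induce_supp_connected c)
    rw [xiH_two_eq (by omega) hreg hg] at this
    omega
  have hdel : G.deleteEdges (F ∪ F') ≤ G.deleteEdges F := by
    rw [← deleteEdges_deleteEdges]
    exact deleteEdges_le _
  have := ncard_le_two_of_subset_edgeBoundary hreg (hdel hab) (hdel hbd) (by omega)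
    (by rw [← hX, hbdry]; exact Set.subset_union_left)
  omega

lemma superLambda_one_deleteEdges (hk : 4 ≤ k) (hreg : ∀ v, degN G v = k) (hg : 4 ≤ G.egirth)
    (hs : SuperLambda G 2) (hF : F ⊆ G.edgeSet) (ht : F.ncard ≤ k - 1) :
    SuperLambda (G.deleteEdges F) 1 := by
  have := hs.1.nonempty
  obtain ⟨F₀, hF₀, hF₀card⟩ := exists_isExtraEdgeCut_deleteEdges_ncard_le_xiH (by omega) hreg hg ht
  exact superLambda_of_forall_lt
    (connected_deleteEdges_of_ncard_lt (by omega) hreg hg hs hF (by omega)) hF₀ hF₀card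
    fun F' hF' ↦ xiH_deleteEdges_lt_ncard_of_isExtraEdgeCut_two hk hreg hg hs hF ht hF'

end Regular

/-- A `k`-regular super-`λ''` graph with `k ≥ 4` and girth at least `4` is super-`λ'`
and satisfies `ρ'(G) = k - 1`. -/
theorem stmt14 {V : Type*} [Fintype V] (G : SimpleGraph V) (k : ℕ) (hk : 4 ≤ k)
    (hreg : ∀ v, degN G v = k) (hs : SuperLambda G 2) (hg : (4 : ℕ∞) ≤ G.egirth) :
    SuperLambda G 1 ∧ rhoH G 1 = k - 1 := by
  have hsuper : ∀ F : Set (Sym2 V), F ⊆ G.edgeSet → F.ncard ≤ k - 1 →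
      SuperLambda (G.deleteEdges F) 1 :=
    fun F hF ht ↦ superLambda_one_deleteEdges hk hreg hg hs hF ht
  refine ⟨by simpa using hsuper ∅ (Set.empty_subset _) (by simp),
    IsGreatest.csSup_eq ⟨hsuper, fun m hm ↦ ?_⟩⟩
  obtain ⟨v⟩ := hs.1.nonempty
  obtain ⟨u, hvu⟩ := exists_adj_of_degN_pos (show 0 < degN G v by rw [hreg]; omega)
  by_contra! hkm
  exact not_connected_deleteEdges_incidenceSet hvu.ne.symm
    (hm _ (G.incidenceSet_subset v) (by rw [ncard_incidenceSet, hreg]; omega)).1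
end
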